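/- Let H ≤ G be finitely generated groups with H undistorted (quasi-isometrically embedded) in G, and suppose the relative Morse boundary of H in G is empty, i.e., no geodesic ray of H remains Morse in the Cayley graph of G. Fix a Morse gauge M. Then there exists D = D(M) such that any two points x, y in (a coset of) H whose connecting geodesic in the Cayley graph of G is M-Morse satisfy d_G(x, y) ≤ D. (Equivalently: M-Morse geodesics of G have uniformly bounded intersection—in the coarse sense—with H.) -/

import Mathlib

/-
If the bound failed, there would be `M`-Morse geodesics of `X` of unbounded length joining points
of `ι Y`; translating by `H` (cocompactness) we may assume they start near a basepoint. The
geodesic of `Y` with the same endpoints is a quasi-geodesic of `X`, so it stays uniformly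
Hausdorff-close to the Morse geodesic. By Arzelà–Ascoli the geodesics of `Y` subconverge to a
geodesic ray, and since the Morse property survives moving the endpoints of the test
quasi-geodesics a bounded amount, the image of this ray is Morse in `X`: a point of the relative
Morse boundary.
-/

open Set Metric

universe u

/-- `γ` restricted to `I` is a `(lam, eps)`-quasi-geodesic. -/
def IsQuasiGeodesicOn {X : Type*} [MetricSpace X] (γ : ℝ → X) (I : Set ℝ)
    (lam eps : ℝ) : Prop :=
  ∀ s ∈ I, ∀ t ∈ I,
    (1 / lam) * |s - t| - eps ≤ dist (γ s) (γ t) ∧ dist (γ s) (γ t) ≤ lam * |s - t| + eps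

/-- `γ` restricted to `I` is a (unit-speed) geodesic. -/
def IsGeodesicOn {X : Type*} [MetricSpace X] (γ : ℝ → X) (I : Set ℝ) : Prop :=
  ∀ s ∈ I, ∀ t ∈ I, dist (γ s) (γ t) = |s - t|

/-- A metric space is geodesic if any two points are joined by a geodesic. -/
def GeodesicSpace (X : Type*) [MetricSpace X] : Prop :=
  ∀ x y : X, ∃ γ : ℝ → X, γ 0 = x ∧ γ (dist x y) = y ∧ IsGeodesicOn γ (Icc 0 (dist x y))

/-- A Morse gauge: an increasing map `ℝ≥1 × ℝ≥0 → ℝ≥0`, continuous in the second argument. -/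
def IsMorseGauge (M : ℝ → ℝ → ℝ) : Prop :=
  (∀ l e, 1 ≤ l → 0 ≤ e → 0 ≤ M l e) ∧
  (∀ l l' e e', 1 ≤ l → 0 ≤ e → l ≤ l' → e ≤ e' → M l e ≤ M l' e') ∧
  (∀ l, 1 ≤ l → ContinuousOn (fun e => M l e) (Ici 0))

/-- Pointwise partial order on Morse gauges (on the domain `ℝ≥1 × ℝ≥0`). -/
def GaugeLE (M N : ℝ → ℝ → ℝ) : Prop :=
  ∀ l e, 1 ≤ l → 0 ≤ e → M l e ≤ N l e

/-- `γ` restricted to `I` is `M`-Morse: every continuous `(lam, eps)`-quasi-geodesic with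
endpoints on `γ` lies in the closed `M lam eps`-neighbourhood of `γ`. -/
def IsMorseWith {X : Type*} [MetricSpace X] (M : ℝ → ℝ → ℝ) (γ : ℝ → X) (I : Set ℝ) : Prop :=
  ∀ lam eps : ℝ, 1 ≤ lam → 0 ≤ eps →
    ∀ (η : ℝ → X) (a b : ℝ), a ≤ b →
      ContinuousOn η (Icc a b) → IsQuasiGeodesicOn η (Icc a b) lam eps →
      η a ∈ γ '' I → η b ∈ γ '' I →
      ∀ t ∈ Icc a b, ∃ s ∈ I, dist (η t) (γ s) ≤ M lam eps

/-- The constant `δ_M` associated to a Morse gauge `M`. -/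
def morseDelta (M : ℝ → ℝ → ℝ) : ℝ :=
  max (4 * M 1 (2 * M 5 0) + 2 * M 5 0) (8 * M 3 0)

open Filter Topology

section

variable {X Y : Type*} [MetricSpace X] [MetricSpace Y]

def IsQuasiIsometricEmbedding (C : ℝ) (ι : Y → X) : Prop :=
  ∀ y₁ y₂ : Y,
    (1 / C) * dist y₁ y₂ - C ≤ dist (ι y₁) (ι y₂) ∧ dist (ι y₁) (ι y₂) ≤ C * dist y₁ y₂ + C

theorem GeodesicSpace.exists_lipschitz_geodesic (hX : GeodesicSpace X) (x y : X) :
    ∃ γ : ℝ → X, γ 0 = x ∧ γ (dist x y) = y ∧ IsGeodesicOn γ (Icc 0 (dist x y)) ∧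
      LipschitzWith 1 γ := by
  obtain ⟨γ, hγ₀, hγ₁, hγ⟩ := hX x y
  have hd : 0 ≤ dist x y := dist_nonneg
  have hlip : LipschitzWith 1 fun s : Icc 0 (dist x y) => γ s :=
    LipschitzWith.of_dist_le_mul fun s t => by
      simp [hγ s s.2 t t.2, Subtype.dist_eq, Real.dist_eq]
  refine ⟨fun t => γ (projIcc 0 (dist x y) hd t), by simpa using hγ₀, by simpa using hγ₁,
    fun s hs t ht => ?_, by simpa [Function.comp_def] using hlip.comp (LipschitzWith.projIcc hd)⟩
  simp only [projIcc_of_mem hd hs, projIcc_of_mem hd ht]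
  exact hγ s hs t ht

theorem IsGeodesicOn.comp_isometry {γ : ℝ → X} {I : Set ℝ} {f : X → Y} (hγ : IsGeodesicOn γ I)
    (hf : Isometry f) : IsGeodesicOn (fun t => f (γ t)) I := fun s hs t ht => by
  rw [hf.dist_eq, hγ s hs t ht]

theorem IsGeodesicOn.continuousOn {γ : ℝ → X} {I : Set ℝ} (hγ : IsGeodesicOn γ I) :
    ContinuousOn γ I :=
  (LipschitzOnWith.of_dist_le_mul fun s hs t ht => by
    simp [hγ s hs t ht, Real.dist_eq] : LipschitzOnWith 1 γ I).continuousOn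

theorem IsGeodesicOn.isQuasiGeodesicOn_comp {γ : ℝ → Y} {I : Set ℝ} {ι : Y → X} {C : ℝ}
    (hγ : IsGeodesicOn γ I) (hι : IsQuasiIsometricEmbedding C ι) :
    IsQuasiGeodesicOn (fun t => ι (γ t)) I C C := fun s hs t ht => by
  simpa only [hγ s hs t ht] using hι (γ s) (γ t)

theorem IsQuasiGeodesicOn.abs_sub_le_mul {f : ℝ → X} {I : Set ℝ} {lam eps : ℝ}
    (hf : IsQuasiGeodesicOn f I lam eps) (hlam : 0 < lam) {s t : ℝ} (hs : s ∈ I) (ht : t ∈ I) :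
    |s - t| ≤ lam * (dist (f s) (f t) + eps) := by
  have := (hf s hs t ht).1
  rw [one_div_mul_eq_div, sub_le_iff_le_add, div_le_iff₀ hlam] at this
  linarith

theorem IsMorseWith.comp_isometryEquiv {M : ℝ → ℝ → ℝ} {γ : ℝ → X} {I : Set ℝ}
    (hγ : IsMorseWith M γ I) (e : X ≃ᵢ X) : IsMorseWith M (fun t => e (γ t)) I := by
  intro lam eps hlam heps η a b hab hη hqg ha hb t ht
  have hqg' : IsQuasiGeodesicOn (fun u => e.symm (η u)) (Icc a b) lam eps := fun s hs u hu => by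
    simpa only [e.symm.dist_eq] using hqg s hs u hu
  have hend : ∀ {u}, η u ∈ (fun t => e (γ t)) '' I → e.symm (η u) ∈ γ '' I := by
    rintro u ⟨s, hs, hsu⟩
    exact ⟨s, hs, by rw [← hsu, e.symm_apply_apply]⟩
  obtain ⟨s, hs, hst⟩ := hγ lam eps hlam heps _ a b hab (e.symm.continuous.comp_continuousOn hη)
    hqg' (hend ha) (hend hb) t ht
  exact ⟨s, hs, by rwa [← e.symm.dist_eq, e.symm_apply_apply]⟩

theorem IsMorseGauge.shift {M : ℝ → ℝ → ℝ} (hM : IsMorseGauge M) {c d : ℝ} (hc : 0 ≤ c)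
    (hd : 0 ≤ d) : IsMorseGauge fun l e => M l (e + c) + d := by
  obtain ⟨hnonneg, hmono, hcont⟩ := hM
  refine ⟨fun l e hl he => ?_, fun l l' e e' hl he hll' hee' => ?_, fun l hl => ?_⟩
  · linarith [hnonneg l (e + c) hl (by linarith)]
  · linarith [hmono l l' (e + c) (e' + c) hl (by linarith) hll' (by linarith)]
  · refine ((hcont l hl).comp (continuous_add_const c).continuousOn fun e he => ?_).add
      continuousOn_const
    simp only [mem_Ici] at he ⊢
    linarith

theorem IsQuasiGeodesicOn.of_dist_projIcc_le {η η' : ℝ → X} {a b lam eps D : ℝ} {I : Set ℝ}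
    (hab : a ≤ b) (hlam : 1 ≤ lam) (hη : IsQuasiGeodesicOn η (Icc a b) lam eps)
    (hI : ∀ u ∈ I, |u - projIcc a b hab u| ≤ D ∧ dist (η' u) (η (projIcc a b hab u)) ≤ D) :
    IsQuasiGeodesicOn η' I lam (eps + 4 * D) := by
  intro u hu v hv
  obtain ⟨hu₁, hu₂⟩ := hI u hu
  obtain ⟨hv₁, hv₂⟩ := hI v hv
  set pu := (projIcc a b hab u : ℝ)
  set pv := (projIcc a b hab v : ℝ)
  have hD : 0 ≤ D := (abs_nonneg _).trans hu₁
  have hp : |pu - pv| ≤ |u - v| := by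
    simpa [Subtype.dist_eq, Real.dist_eq] using (LipschitzWith.projIcc hab).dist_le_mul u v
  have hpuv : |u - v| ≤ |pu - pv| + 2 * D := by
    have := abs_sub_le u pu v
    have := abs_sub_le pu pv v
    rw [abs_sub_comm] at hv₁
    linarith
  obtain ⟨hlow, hup⟩ := hη pu (projIcc a b hab u).2 pv (projIcc a b hab v).2
  have htri₁ := dist_triangle4 (η' u) (η pu) (η pv) (η' v)
  have htri₂ := dist_triangle4 (η pu) (η' u) (η' v) (η pv)
  rw [dist_comm (η pv) (η' v)] at htri₁
  rw [dist_comm (η pu) (η' u)] at htri₂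
  have hlam₀ : 0 < lam := by linarith
  have hinv : 1 / lam * |u - v| ≤ 1 / lam * |pu - pv| + 2 * D := by
    have : 1 / lam * (2 * D) ≤ 2 * D := by
      rw [div_mul_eq_mul_div, one_mul, div_le_iff₀ hlam₀]; nlinarith
    nlinarith [mul_le_mul_of_nonneg_left hpuv (by positivity : (0 : ℝ) ≤ 1 / lam)]
  have := mul_le_mul_of_nonneg_left hp hlam₀.le
  constructor <;> linarith

theorem abs_sub_projIcc_le {a b P Q u : ℝ} (hab : a ≤ b) (hP : 0 ≤ P)
    (hu : u ∈ Icc (a - P) (b + Q)) : |u - projIcc a b hab u| ≤ max P Q := by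
  have := le_max_left P Q
  have := le_max_right P Q
  rw [coe_projIcc, abs_le]
  constructor <;> rcases max_cases a (min b u) with ⟨h, _⟩ | ⟨h, _⟩ <;> rw [h] <;>
    rcases min_cases b u with ⟨h', _⟩ | ⟨h', _⟩ <;> linarith [hu.1, hu.2]

/-- Attaching geodesic tails from `x` to `η a` and from `η b` to `y`. -/
theorem GeodesicSpace.exists_extend_path (hX : GeodesicSpace X) {η : ℝ → X} {a b : ℝ}
    (hab : a ≤ b) (hη : ContinuousOn η (Icc a b)) (x y : X) :
    ∃ η' : ℝ → X, Continuous η' ∧ η' (a - dist x (η a)) = x ∧ η' (b + dist (η b) y) = y ∧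
      (∀ u ∈ Icc a b, η' u = η u) ∧
      ∀ u, dist (η' u) (η (projIcc a b hab u)) ≤ |u - projIcc a b hab u| := by
  obtain ⟨τ₁, hτ₁₀, hτ₁P, -, hτ₁⟩ := hX.exists_lipschitz_geodesic x (η a)
  obtain ⟨τ₂, hτ₂₀, hτ₂Q, -, hτ₂⟩ := hX.exists_lipschitz_geodesic (η b) y
  set P := dist x (η a)
  set Q := dist (η b) y
  set p : ℝ → ℝ := fun u => projIcc a b hab u
  set η' : ℝ → X := fun u =>
    if u ≤ a then τ₁ (u - a + P) else if u ≤ b then η (p u) else τ₂ (u - b)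
  have hη'_eq : ∀ u ∈ Icc a b, η' u = η u := by
    rintro u ⟨hau, hub⟩
    rcases hau.eq_or_lt with rfl | hau
    · simp [η', hτ₁P]
    · simp [η', p, not_le.2 hau, hub, projIcc_of_mem hab ⟨hau.le, hub⟩]
  refine ⟨η', ?_, by simp [η', P, hτ₁₀], ?_, hη'_eq, fun u => ?_⟩
  · have hmid : Continuous fun u => η (p u) :=
      hη.comp_continuous (continuous_subtype_val.comp continuous_projIcc) fun u =>
        (projIcc a b hab u).2
    refine Continuous.if_le ((hτ₁.continuous).comp (by fun_prop)) ?_ continuous_id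
      continuous_const fun u hu => ?_
    · refine Continuous.if_le hmid ((hτ₂.continuous).comp (by fun_prop)) continuous_id
        continuous_const fun u hu => ?_
      simp [p, hu, projIcc_right, hτ₂₀]
    · simp [p, hu, hab, projIcc_left, hτ₁P]
  · have hQ : 0 ≤ Q := dist_nonneg
    rcases hQ.eq_or_lt with hQ₀ | hQ₀
    · rw [← hQ₀, add_zero, hη'_eq b ⟨hab, le_rfl⟩]
      exact dist_eq_zero.1 hQ₀.symm
    · simp [η', not_le.2 (show a < b + Q by linarith), hQ₀, hτ₂Q]
  rcases le_or_gt u a with hua | hua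
  · simpa [η', p, hua, projIcc_of_le_left hab hua, ← hτ₁P, Real.dist_eq]
      using hτ₁.dist_le_mul (u - a + P) P
  rcases le_or_gt u b with hub | hub
  · simp [η', p, hub, not_le.2 hua, projIcc_of_mem hab ⟨hua.le, hub⟩]
  · simpa [η', p, not_le.2 hua, not_le.2 hub, projIcc_of_right_le hab hub.le, ← hτ₂₀,
      Real.dist_eq] using hτ₂.dist_le_mul (u - b) 0

theorem IsMorseWith.exists_dist_le_of_endpoints_near (hX : GeodesicSpace X)
    {M : ℝ → ℝ → ℝ} {G : ℝ → X} {I : Set ℝ} (hG : IsMorseWith M G I) {lam eps : ℝ}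
    (hlam : 1 ≤ lam) (heps : 0 ≤ eps) {η : ℝ → X} {a b : ℝ} (hab : a ≤ b)
    (hη : ContinuousOn η (Icc a b)) (hqg : IsQuasiGeodesicOn η (Icc a b) lam eps)
    {D t₁ t₂ : ℝ} (ht₁ : t₁ ∈ I) (ht₂ : t₂ ∈ I) (h₁ : dist (G t₁) (η a) ≤ D)
    (h₂ : dist (η b) (G t₂) ≤ D) :
    ∀ t ∈ Icc a b, ∃ s ∈ I, dist (η t) (G s) ≤ M lam (eps + 4 * D) := by
  obtain ⟨η', hη'_cont, hstart, hend, hη'_eq, hη'_close⟩ :=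
    hX.exists_extend_path hab hη (G t₁) (G t₂)
  have hP : 0 ≤ dist (G t₁) (η a) := dist_nonneg
  have hQ : 0 ≤ dist (η b) (G t₂) := dist_nonneg
  have hqg' := hqg.of_dist_projIcc_le hab hlam fun u hu =>
    have := (abs_sub_projIcc_le hab hP hu).trans (max_le h₁ h₂)
    ⟨this, (hη'_close u).trans this⟩
  intro t ht
  obtain ⟨s, hs, hst⟩ := hG lam _ hlam (by linarith) η' _ _ (by linarith)
    hη'_cont.continuousOn hqg' ⟨t₁, ht₁, hstart.symm⟩ ⟨t₂, ht₂, hend.symm⟩ t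
    ⟨by linarith [ht.1], by linarith [ht.2]⟩
  exact ⟨s, hs, by rwa [hη'_eq t ht] at hst⟩

theorem dist_le_mul_of_forall_Icc_natCast {f : ℝ → X} {K : ℝ}
    (hf : ∀ i : ℕ, ∀ s t : ℝ, i ≤ s → s ≤ t → t ≤ i + 1 → dist (f s) (f t) ≤ K * (t - s))
    {s t : ℝ} (hs : 0 ≤ s) (hst : s ≤ t) : dist (f s) (f t) ≤ K * (t - s) := by
  suffices ∀ k : ℕ, ∀ s t : ℝ, 0 ≤ s → s ≤ t → t ≤ k → dist (f s) (f t) ≤ K * (t - s) from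
    this _ s t hs hst (Nat.le_ceil t)
  intro k
  induction k with
  | zero =>
    intro s t hs hst ht
    obtain rfl : s = t := le_antisymm hst (by norm_num at ht; linarith)
    simp
  | succ k ih =>
    intro s t hs hst ht
    push_cast at ht
    rcases le_or_gt t k with htk | hkt
    · exact ih s t hs hst htk
    rcases le_or_gt (k : ℝ) s with hks | hsk
    · exact hf k s t hks hst ht
    calc dist (f s) (f t) ≤ dist (f s) (f k) + dist (f (k : ℝ)) (f t) := dist_triangle _ _ _
      _ ≤ K * (k - s) + K * (t - k) :=
        add_le_add (ih s k hs hsk.le le_rfl) (hf k k t le_rfl hkt.le ht)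
      _ = K * (t - s) := by ring

theorem GeodesicSpace.exists_path_through (hX : GeodesicSpace X) {K : ℝ} (q : ℕ → X)
    (hq : ∀ i, dist (q i) (q (i + 1)) ≤ K) :
    ∃ η : ℝ → X, (∀ i : ℕ, η i = q i) ∧ (∀ u, 0 ≤ u → dist (η u) (q ⌊u⌋₊) ≤ K) ∧
      ∀ s t, 0 ≤ s → 0 ≤ t → dist (η s) (η t) ≤ K * |s - t| := by
  choose c hc₀ hc₁ _ hc using fun i => hX.exists_lipschitz_geodesic (q i) (q (i + 1))
  set d : ℕ → ℝ := fun i => dist (q i) (q (i + 1))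
  set η : ℝ → X := fun u => c ⌊u⌋₊ ((u - ⌊u⌋₊) * d ⌊u⌋₊)
  have hη_nat : ∀ i : ℕ, η i = q i := fun i => by simp [η, hc₀]
  have hη_piece : ∀ i : ℕ, ∀ u ∈ Icc (i : ℝ) (i + 1), η u = c i ((u - i) * d i) := by
    rintro i u ⟨hiu, hui⟩
    rcases hui.lt_or_eq with hui | rfl
    · have : ⌊u⌋₊ = i := (Nat.floor_eq_iff ((Nat.cast_nonneg i).trans hiu)).2 ⟨hiu, hui⟩
      change c ⌊u⌋₊ ((u - ⌊u⌋₊) * d ⌊u⌋₊) = c i ((u - i) * d i)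
      rw [this]
    · have : ((i + 1 : ℕ) : ℝ) = i + 1 := by push_cast; ring
      rw [← this, hη_nat, this, add_sub_cancel_left, one_mul, hc₁]
  have hc_le : ∀ i : ℕ, ∀ x y, dist (c i x) (c i y) ≤ |x - y| := fun i x y => by
    simpa [Real.dist_eq] using (hc i).dist_le_mul x y
  refine ⟨η, hη_nat, fun u hu => ?_, fun s t hs ht => ?_⟩
  · have hfrac : u - ⌊u⌋₊ ∈ Icc (0 : ℝ) 1 :=
      ⟨sub_nonneg.2 (Nat.floor_le hu), by linarith [Nat.lt_floor_add_one u]⟩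
    calc dist (η u) (q ⌊u⌋₊) = dist (c ⌊u⌋₊ ((u - ⌊u⌋₊) * d ⌊u⌋₊)) (c ⌊u⌋₊ 0) := by
          rw [hc₀]
      _ ≤ |(u - ⌊u⌋₊) * d ⌊u⌋₊ - 0| := hc_le _ _ _
      _ ≤ K := by
          rw [sub_zero, abs_of_nonneg (mul_nonneg hfrac.1 dist_nonneg)]
          exact (mul_le_of_le_one_left dist_nonneg hfrac.2).trans (hq _)
  have hpiece : ∀ i : ℕ, ∀ s t : ℝ, i ≤ s → s ≤ t → t ≤ i + 1 →
      dist (η s) (η t) ≤ K * (t - s) := by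
    intro i s t his hst hti
    rw [hη_piece i s ⟨his, hst.trans hti⟩, hη_piece i t ⟨his.trans hst, hti⟩]
    calc _ ≤ |(s - i) * d i - (t - i) * d i| := hc_le _ _ _
      _ = (t - s) * d i := by
          rw [← sub_mul, abs_mul, abs_of_nonneg (dist_nonneg : 0 ≤ d i),
            abs_of_nonpos (by linarith)]
          ring
      _ ≤ K * (t - s) := by rw [mul_comm]; exact mul_le_mul_of_nonneg_right (hq i) (by linarith)
  rcases le_total s t with hst | hts
  · rw [abs_of_nonpos (by linarith), neg_sub]
    exact dist_le_mul_of_forall_Icc_natCast hpiece hs hst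
  · rw [abs_of_nonneg (by linarith), dist_comm]
    exact dist_le_mul_of_forall_Icc_natCast hpiece ht hts

theorem abs_sub_min_floor_le_one {x R : ℝ} (hx : 0 ≤ x) (hxR : x < R + 1) :
    |x - min (⌊x⌋₊ : ℝ) R| ≤ 1 := by
  have h₁ := Nat.floor_le hx
  have h₂ := Nat.lt_floor_add_one x
  rw [abs_le]
  constructor <;> cases min_cases (⌊x⌋₊ : ℝ) R <;> linarith

/-- The lower bound comes from `f` through the samples `f (min ⌊u⌋₊ R)`, each losing at most `1`
in the parameter. -/
theorem IsQuasiGeodesicOn.of_dist_sample_le {f η : ℝ → X} {R lam eps : ℝ} (hR : 0 ≤ R)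
    (hlam : 1 ≤ lam) (heps : 0 ≤ eps) (hf : IsQuasiGeodesicOn f (Icc 0 R) lam eps)
    (hnear : ∀ u, 0 ≤ u → dist (η u) (f (min (⌊u⌋₊ : ℝ) R)) ≤ lam + eps)
    (hlip : ∀ s t, 0 ≤ s → 0 ≤ t → dist (η s) (η t) ≤ (lam + eps) * |s - t|) :
    IsQuasiGeodesicOn η (Ico 0 (R + 1)) (lam + eps) (4 * (lam + eps)) := by
  intro s hs t ht
  set c : ℝ → ℝ := fun x => min (⌊x⌋₊ : ℝ) R
  have hc : ∀ x, 0 ≤ x → c x ∈ Icc 0 R := fun x hx => ⟨le_min (by positivity) hR, min_le_right _ _⟩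
  refine ⟨?_, by linarith [hlip s t hs.1 ht.1]⟩
  obtain ⟨hlow, -⟩ := hf _ (hc s hs.1) _ (hc t ht.1)
  have htri := dist_triangle4 (f (c s)) (η s) (η t) (f (c t))
  rw [dist_comm (f (c s)) (η s)] at htri
  have hst : |s - t| - 2 ≤ |c s - c t| := by
    have := abs_sub_le s (c s) t
    have := abs_sub_le (c s) (c t) t
    have := abs_sub_min_floor_le_one hs.1 hs.2
    have := abs_sub_min_floor_le_one ht.1 ht.2
    rw [abs_sub_comm t] at this
    linarith
  have hK : 1 / (lam + eps) * |s - t| ≤ 1 / lam * |s - t| := by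
    gcongr
    linarith
  have hlam₁ : 1 / lam ≤ 1 := by rw [div_le_one (by linarith)]; exact hlam
  have := mul_le_mul_of_nonneg_left hst (by positivity : (0 : ℝ) ≤ 1 / lam)
  nlinarith [hnear s hs.1, hnear t ht.1, abs_nonneg (s - t)]

/-- Taming a (possibly discontinuous) quasi-geodesic: sample it at the integers and join the
samples by geodesics. -/
theorem IsQuasiGeodesicOn.exists_continuous (hX : GeodesicSpace X) {f : ℝ → X}
    {R lam eps : ℝ} (hR : 0 ≤ R) (hlam : 1 ≤ lam) (heps : 0 ≤ eps)
    (hf : IsQuasiGeodesicOn f (Icc 0 R) lam eps) :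
    ∃ (η : ℝ → X) (m : ℝ), 0 ≤ m ∧ η 0 = f 0 ∧ η m = f R ∧ ContinuousOn η (Icc 0 m) ∧
      IsQuasiGeodesicOn η (Icc 0 m) (lam + eps) (4 * (lam + eps)) ∧
      (∀ r ∈ Icc 0 R, ∃ u ∈ Icc 0 m, dist (f r) (η u) ≤ 2 * (lam + eps)) ∧
      (∀ u ∈ Icc 0 m, ∃ r ∈ Icc 0 R, dist (η u) (f r) ≤ lam + eps) := by
  have hc : ∀ x, 0 ≤ x → min x R ∈ Icc 0 R := fun x hx => ⟨le_min hx hR, min_le_right _ _⟩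
  obtain ⟨η, hη_nat, hη_near, hη_lip⟩ :=
    hX.exists_path_through (K := lam + eps) (fun i => f (min i R)) fun i => by
      obtain ⟨-, hup⟩ := hf _ (hc i (Nat.cast_nonneg i)) _ (hc (i + 1) (by positivity))
      have : |min (i : ℝ) R - min (i + 1 : ℝ) R| ≤ 1 := by
        simpa using abs_min_sub_min_le_max (i : ℝ) R (i + 1) R
      push_cast
      nlinarith
  set m : ℝ := (⌈R⌉₊ : ℝ)
  have hRm : R ≤ m := Nat.le_ceil R
  have hmR : m < R + 1 := Nat.ceil_lt_add_one hR
  have hqg := hf.of_dist_sample_le hR hlam heps hη_near hη_lip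
  refine ⟨η, m, by positivity, by simpa [hR] using hη_nat 0,
    (hη_nat ⌈R⌉₊).trans (congrArg f (min_eq_right hRm)), ?_,
    fun s hs t ht => hqg s ⟨hs.1, hs.2.trans_lt hmR⟩ t ⟨ht.1, ht.2.trans_lt hmR⟩,
    fun r hr => ⟨r, ⟨hr.1, hr.2.trans hRm⟩, ?_⟩,
    fun u hu => ⟨min ⌊u⌋₊ R, hc _ (by positivity), hη_near u hu.1⟩⟩
  · exact (LipschitzOnWith.of_dist_le' (K := lam + eps) fun s hs t ht => by
      simpa [Real.dist_eq] using hη_lip s t hs.1 ht.1).continuousOn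
  · obtain ⟨-, hup⟩ := hf r hr _ (hc _ (Nat.cast_nonneg ⌊r⌋₊))
    have : |r - min (⌊r⌋₊ : ℝ) R| ≤ 1 := abs_sub_min_floor_le_one hr.1 (by linarith [hr.2])
    have := dist_triangle (f r) (f (min ⌊r⌋₊ R)) (η r)
    rw [dist_comm (f (min _ R))] at this
    nlinarith [hη_near r hr.1]

theorem ContinuousOn.exists_infDist_eq {η : ℝ → X} {a b : ℝ} {S₁ S₂ : Set X} (hab : a ≤ b)
    (hη : ContinuousOn η (Icc a b)) (ha : η a ∈ S₁) (hb : η b ∈ S₂) :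
    ∃ u ∈ Icc a b, infDist (η u) S₁ = infDist (η u) S₂ := by
  have hcont : ContinuousOn (fun u => infDist (η u) S₁ - infDist (η u) S₂) (Icc a b) :=
    ((continuous_infDist_pt S₁).comp_continuousOn hη).sub
      ((continuous_infDist_pt S₂).comp_continuousOn hη)
  have h0 : (0 : ℝ) ∈ Icc (infDist (η a) S₁ - infDist (η a) S₂)
      (infDist (η b) S₁ - infDist (η b) S₂) :=
    ⟨by linarith [infDist_zero_of_mem ha, infDist_nonneg (x := η a) (s := S₂)],
      by linarith [infDist_zero_of_mem hb, infDist_nonneg (x := η b) (s := S₁)]⟩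
  obtain ⟨u, hu, hu0⟩ := intermediate_value_Icc hab hcont h0
  exact ⟨u, hu, sub_eq_zero.1 hu0⟩

/-- A point of the path equidistant from `G '' [0, s]` and `G '' [s, L]` is close to both, hence
to `G s`. -/
theorem IsGeodesicOn.exists_dist_le_of_path {G : ℝ → X} {L : ℝ} (hG : IsGeodesicOn G (Icc 0 L))
    {η : ℝ → X} {a b K : ℝ} (hab : a ≤ b) (hη : ContinuousOn η (Icc a b)) (ha : η a = G 0)
    (hb : η b = G L) (hK : ∀ u ∈ Icc a b, ∃ s ∈ Icc 0 L, dist (η u) (G s) ≤ K) :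
    ∀ s ∈ Icc 0 L, ∃ u ∈ Icc a b, dist (G s) (η u) ≤ 3 * K := by
  intro s hs
  have hsub₁ : Icc 0 s ⊆ Icc 0 L := Icc_subset_Icc le_rfl hs.2
  have hsub₂ : Icc s L ⊆ Icc 0 L := Icc_subset_Icc hs.1 le_rfl
  set S₁ := G '' Icc 0 s
  set S₂ := G '' Icc s L
  have hS₁ : IsCompact S₁ := isCompact_Icc.image_of_continuousOn (hG.continuousOn.mono hsub₁)
  have hS₂ : IsCompact S₂ := isCompact_Icc.image_of_continuousOn (hG.continuousOn.mono hsub₂)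
  obtain ⟨u, hu, hu_eq⟩ := hη.exists_infDist_eq hab (S₁ := S₁) (S₂ := S₂)
    ⟨0, ⟨le_rfl, hs.1⟩, ha.symm⟩ ⟨L, ⟨hs.2, le_rfl⟩, hb.symm⟩
  have hclose : infDist (η u) S₁ ≤ K ∧ infDist (η u) S₂ ≤ K := by
    obtain ⟨t, ht, hut⟩ := hK u hu
    rcases le_total t s with hts | hst
    · have := (infDist_le_dist_of_mem (show G t ∈ S₁ from ⟨t, ⟨ht.1, hts⟩, rfl⟩)).trans hut
      exact ⟨this, hu_eq ▸ this⟩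
    · have := (infDist_le_dist_of_mem (show G t ∈ S₂ from ⟨t, ⟨hst, ht.2⟩, rfl⟩)).trans hut
      exact ⟨hu_eq ▸ this, this⟩
  obtain ⟨_, ⟨t₁, ht₁, rfl⟩, hd₁⟩ := hS₁.exists_infDist_eq_dist ⟨G s, s, ⟨hs.1, le_rfl⟩, rfl⟩ (η u)
  obtain ⟨_, ⟨t₂, ht₂, rfl⟩, hd₂⟩ := hS₂.exists_infDist_eq_dist ⟨G s, s, ⟨le_rfl, hs.2⟩, rfl⟩ (η u)
  rw [hd₁] at hclose
  rw [hd₂] at hclose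
  have ht₁₂ : t₂ - t₁ ≤ 2 * K := by
    rw [← abs_of_nonneg (by linarith [ht₁.2, ht₂.1] : 0 ≤ t₂ - t₁),
      ← hG t₂ (hsub₂ ht₂) t₁ (hsub₁ ht₁)]
    linarith [dist_triangle_left (G t₂) (G t₁) (η u)]
  have hst₁ : dist (G s) (G t₁) ≤ 2 * K := by
    rw [hG s hs t₁ (hsub₁ ht₁), abs_of_nonneg (by linarith [ht₁.2])]
    linarith [ht₂.1]
  refine ⟨u, hu, ?_⟩
  linarith [dist_triangle (G s) (G t₁) (η u), dist_comm (G t₁) (η u)]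

theorem IsMorseWith.hausdorff_le_of_isQuasiGeodesicOn (hX : GeodesicSpace X)
    {M : ℝ → ℝ → ℝ} {G : ℝ → X} {L : ℝ} (hL : 0 ≤ L) (hG : IsGeodesicOn G (Icc 0 L))
    (hGM : IsMorseWith M G (Icc 0 L)) {f : ℝ → X} {R lam eps : ℝ} (hR : 0 ≤ R) (hlam : 1 ≤ lam)
    (heps : 0 ≤ eps) (hf : IsQuasiGeodesicOn f (Icc 0 R) lam eps) (hf₀ : f 0 = G 0)
    (hfR : f R = G L) :
    (∀ r ∈ Icc 0 R, ∃ s ∈ Icc 0 L,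
      dist (f r) (G s) ≤ 3 * M (lam + eps) (4 * (lam + eps)) + 2 * (lam + eps)) ∧
    (∀ s ∈ Icc 0 L, ∃ r ∈ Icc 0 R,
      dist (G s) (f r) ≤ 3 * M (lam + eps) (4 * (lam + eps)) + 2 * (lam + eps)) := by
  obtain ⟨η, m, hm, hη₀, hηm, hη_cont, hη, hfη, hηf⟩ := hf.exists_continuous hX hR hlam heps
  have hη_near := hGM _ _ (by linarith) (by positivity) η 0 m hm hη_cont hη
    ⟨0, ⟨le_rfl, hL⟩, (hη₀.trans hf₀).symm⟩ ⟨L, ⟨hL, le_rfl⟩, (hηm.trans hfR).symm⟩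
  have hM : 0 ≤ M (lam + eps) (4 * (lam + eps)) := by
    obtain ⟨s, -, hs⟩ := hη_near 0 ⟨le_rfl, hm⟩
    exact dist_nonneg.trans hs
  have hG_near := hG.exists_dist_le_of_path hm hη_cont (hη₀.trans hf₀) (hηm.trans hfR) hη_near
  constructor
  · intro r hr
    obtain ⟨u, hu, hru⟩ := hfη r hr
    obtain ⟨s, hs, hus⟩ := hη_near u hu
    exact ⟨s, hs, by linarith [dist_triangle (f r) (η u) (G s)]⟩
  · intro s hs
    obtain ⟨u, hu, hsu⟩ := hG_near s hs
    obtain ⟨r, hr, hur⟩ := hηf u hu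
    exact ⟨r, hr, by linarith [dist_triangle (G s) (η u) (f r)]⟩

/-- By Tychonoff the `σ n` converge pointwise along an ultrafilter; equicontinuity upgrades this to
uniform convergence on compacts (Arzelà–Ascoli). -/
theorem exists_geodesicRay_uniform_limit [ProperSpace Y]
    (σ : ℕ → ℝ → Y) (R : ℕ → ℝ) (y₀ : Y) (C : ℝ) (hσ_lip : ∀ n, LipschitzWith 1 (σ n))
    (hσ : ∀ n, IsGeodesicOn (σ n) (Icc 0 (R n))) (hσ₀ : ∀ n, dist (σ n 0) y₀ ≤ C)
    (hR : Tendsto R atTop atTop) :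
    ∃ γ : ℝ → Y, IsGeodesicOn γ (Ici 0) ∧
      ∀ T ε, 0 < ε → ∃ n, T ≤ R n ∧ ∀ r ∈ Icc 0 T, dist (σ n r) (γ r) < ε := by
  let U : Ultrafilter ℕ := .of atTop
  have hRU : ∀ T, ∀ᶠ n in (U : Filter ℕ), T ≤ R n := fun T =>
    Ultrafilter.of_le atTop (hR.eventually_ge_atTop T)
  have hσ_mem : ∀ n, σ n ∈ Set.pi univ fun t => closedBall y₀ (|t| + C) := fun n t _ => by
    rw [mem_closedBall]
    calc dist (σ n t) y₀ ≤ dist (σ n t) (σ n 0) + dist (σ n 0) y₀ := dist_triangle _ _ _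
      _ ≤ |t| + C := add_le_add (by simpa [Real.dist_eq] using (hσ_lip n).dist_le_mul t 0) (hσ₀ n)
  obtain ⟨γ, -, hγ⟩ := (isCompact_univ_pi fun t =>
    isCompact_closedBall y₀ (|t| + C)).ultrafilter_le_nhds (U.map σ)
      (le_principal_iff.2 (Ultrafilter.mem_map.2 (univ_mem' hσ_mem)))
  have hσγ : Tendsto σ U (𝓝 γ) := hγ
  refine ⟨γ, fun s hs t ht => ?_, fun T ε hε => ?_⟩
  · refine tendsto_nhds_unique ((tendsto_pi_nhds.1 hσγ s).dist (tendsto_pi_nhds.1 hσγ t))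
      (tendsto_const_nhds.congr' ?_)
    filter_upwards [hRU (max s t)] with n hn
    exact (hσ n s ⟨hs, (le_max_left s t).trans hn⟩ t ⟨ht, (le_max_right s t).trans hn⟩).symm
  · have hequi : Equicontinuous σ := Metric.equicontinuous_of_continuity_modulus id tendsto_id σ
      fun x y n => by simpa using (hσ_lip n).dist_le_mul x y
    have hunif := (UniformOnFun.tendsto_iff_tendstoUniformlyOn.1
      ((EquicontinuousOn.tendsto_uniformOnFun_iff_pi (𝔖 := {K | IsCompact K}) (fun K hK => hK)
        (sUnion_eq_univ_iff.2 fun t => ⟨{t}, isCompact_singleton, rfl⟩)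
        (fun K _ => hequi.equicontinuousOn K) U γ).2 hσγ)) (Icc 0 T) isCompact_Icc
    obtain ⟨n, hRn, hn⟩ := ((hRU T).and (Metric.tendstoUniformlyOn_iff.1 hunif ε hε)).exists
    exact ⟨n, hRn, fun r hr => by rw [dist_comm]; exact hn r hr⟩

theorem isMorseWith_of_uniform_approx
    (hX : GeodesicSpace X) {ι : Y → X} {C : ℝ} (hC : 1 ≤ C) (hι : IsQuasiIsometricEmbedding C ι)
    {M : ℝ → ℝ → ℝ} {K : ℝ} {γ : ℝ → Y}
    (happrox : ∀ T, ∃ (σ : ℝ → Y) (R : ℝ) (G : ℝ → X) (L : ℝ), T ≤ R ∧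
      IsGeodesicOn σ (Icc 0 R) ∧ IsMorseWith M G (Icc 0 L) ∧
      (∀ r ∈ Icc 0 R, ∃ s ∈ Icc 0 L, dist (ι (σ r)) (G s) ≤ K) ∧
      (∀ s ∈ Icc 0 L, ∃ r ∈ Icc 0 R, dist (G s) (ι (σ r)) ≤ K) ∧
      ∀ r ∈ Icc 0 T, dist (σ r) (γ r) < 1) :
    IsMorseWith (fun l e => M l (e + 4 * (K + 2 * C)) + (K + 2 * C)) (fun r => ι (γ r))
      (Ici 0) := by
  rintro lam eps hlam heps η a b hab hη hqg ⟨s₁, hs₁, hηa⟩ ⟨s₂, hs₂, hηb⟩ t ht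
  simp only at hηa hηb ⊢
  set M' := M lam (eps + 4 * (K + 2 * C))
  -- `T` is chosen so large that the point `r` found below satisfies `r ≤ T`
  set T := max (max s₁ s₂) (s₁ + C * (K + M' + (lam * (b - a) + eps) + 2 * C + C))
  obtain ⟨σ, R, G, L, hTR, hσ, hGM, hσG, hGσ, hσγ⟩ := happrox T
  have hισγ : ∀ r ∈ Icc 0 T, dist (ι (σ r)) (ι (γ r)) ≤ 2 * C := fun r hr => by
    nlinarith [(hι (σ r) (γ r)).2, hσγ r hr]
  have hγG : ∀ s ∈ Icc 0 T, ∃ s' ∈ Icc 0 L, dist (G s') (ι (γ s)) ≤ K + 2 * C := by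
    intro s hs
    obtain ⟨s', hs', hss'⟩ := hσG s ⟨hs.1, hs.2.trans hTR⟩
    refine ⟨s', hs', ?_⟩
    linarith [dist_triangle_left (G s') (ι (γ s)) (ι (σ s)), hισγ s hs]
  have hs₁T : s₁ ∈ Icc 0 T := ⟨hs₁, (le_max_left _ _).trans (le_max_left _ _)⟩
  have hs₂T : s₂ ∈ Icc 0 T := ⟨hs₂, (le_max_right _ _).trans (le_max_left _ _)⟩
  obtain ⟨t₁, ht₁, h₁⟩ := hγG s₁ hs₁T
  obtain ⟨t₂, ht₂, h₂⟩ := hγG s₂ hs₂T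
  rw [hηa] at h₁
  rw [hηb, dist_comm] at h₂
  obtain ⟨s', hs', hts'⟩ :=
    hGM.exists_dist_le_of_endpoints_near hX hlam heps hab hη hqg ht₁ ht₂ h₁ h₂ t ht
  obtain ⟨r, hr, hs'r⟩ := hGσ s' hs'
  have hηat : dist (η a) (η t) ≤ lam * (b - a) + eps := by
    have := (hqg a ⟨le_rfl, hab⟩ t ht).2
    rw [abs_of_nonpos (by linarith [ht.1])] at this
    nlinarith [ht.2]
  have hrT : r ≤ T := by
    have hηa' : dist (ι (σ s₁)) (η a) ≤ 2 * C := hηa ▸ hισγ s₁ hs₁T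
    have hfar : dist (ι (σ s₁)) (ι (σ r)) ≤ 2 * C + (lam * (b - a) + eps) + M' + K := by
      linarith [dist_triangle4 (ι (σ s₁)) (η a) (η t) (G s'),
        dist_triangle (ι (σ s₁)) (G s') (ι (σ r))]
    have := (hσ.isQuasiGeodesicOn_comp hι).abs_sub_le_mul (by linarith)
      ⟨hs₁, hs₁T.2.trans hTR⟩ hr
    exact le_max_of_le_right (by nlinarith [neg_abs_le (s₁ - r)])
  refine ⟨r, hr.1, ?_⟩
  linarith [dist_triangle4 (η t) (G s') (ι (σ r)) (ι (γ r)), hισγ r ⟨hr.1, hrT⟩]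

end

theorem statement15_general {X : Type u} {Y : Type u} [MetricSpace X] [MetricSpace Y]
    [ProperSpace Y]
    (hX : GeodesicSpace X) (hY : GeodesicSpace Y)
    (H : Type u) [Group H] [MulAction H X] [MulAction H Y]
    (hHX : ∀ h : H, Isometry (fun x : X => h • x))
    (hHY : ∀ h : H, Isometry (fun y : Y => h • y))
    (y₀ : Y) (ι : Y → X)
    (hequiv : ∀ (h : H) (y : Y), ι (h • y) = h • ι y)
    (C : ℝ) (hC : 1 ≤ C)
    (hqie : ∀ y₁ y₂ : Y,
      (1 / C) * dist y₁ y₂ - C ≤ dist (ι y₁) (ι y₂) ∧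
      dist (ι y₁) (ι y₂) ≤ C * dist y₁ y₂ + C)
    (hcobounded : ∀ y : Y, ∃ h : H, dist (h • y₀) y ≤ C)
    (hrel : ¬ ∃ (γ : ℝ → Y) (N : ℝ → ℝ → ℝ), IsMorseGauge N ∧
      IsGeodesicOn γ (Ici 0) ∧ IsMorseWith N (fun r => ι (γ r)) (Ici 0))
    (M : ℝ → ℝ → ℝ) (hM : IsMorseGauge M) :
    ∃ D : ℝ, ∀ (y₁ y₂ : Y) (g : ℝ → X) (L : ℝ), 0 ≤ L →
      g 0 = ι y₁ → g L = ι y₂ →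
      IsGeodesicOn g (Icc 0 L) → IsMorseWith M g (Icc 0 L) →
      dist (ι y₁) (ι y₂) ≤ D := by
  by_contra! hunbounded
  have : IsIsometricSMul H X := ⟨hHX⟩
  have : IsIsometricSMul H Y := ⟨hHY⟩
  choose y₁ y₂ g L hL hg₀ hgL hg hgM hfar using fun n : ℕ => hunbounded (C * n + C)
  -- translate the `n`-th configuration back near the basepoint `y₀`
  choose h hh using fun n => hcobounded (y₁ n)
  set G : ℕ → ℝ → X := fun n t => (h n)⁻¹ • g n t
  choose σ hσ₀ hσR hσ hσ_lip using fun n =>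
    hY.exists_lipschitz_geodesic ((h n)⁻¹ • y₁ n) ((h n)⁻¹ • y₂ n)
  have hR : Tendsto (fun n => dist ((h n)⁻¹ • y₁ n) ((h n)⁻¹ • y₂ n)) atTop atTop := by
    refine tendsto_atTop_mono (fun n => ?_) tendsto_natCast_atTop_atTop
    rw [dist_smul]
    nlinarith [(hqie (y₁ n) (y₂ n)).2, hfar n]
  obtain ⟨γ, hγ, happrox⟩ := exists_geodesicRay_uniform_limit σ _ y₀ C hσ_lip hσ
    (fun n => by rw [hσ₀, ← dist_smul (h n), smul_inv_smul, dist_comm]; exact hh n) hR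
  have hGM : ∀ n, IsMorseWith M (G n) (Icc 0 (L n)) := fun n =>
    (hgM n).comp_isometryEquiv (IsometryEquiv.constSMul (h n)⁻¹)
  have hclose := fun n => (hGM n).hausdorff_le_of_isQuasiGeodesicOn hX (hL n)
    ((hg n).comp_isometry (isometry_smul X (h n)⁻¹)) dist_nonneg hC (by linarith)
    ((hσ n).isQuasiGeodesicOn_comp hqie) (by rw [hσ₀, hequiv, ← hg₀])
    (by rw [hσR, hequiv, ← hgL])
  set K := 3 * M (C + C) (4 * (C + C)) + 2 * (C + C)
  have hK : 0 ≤ K := by have := hM.1 (C + C) (4 * (C + C)) (by linarith) (by linarith); positivity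
  refine hrel ⟨γ, _, hM.shift (c := 4 * (K + 2 * C)) (d := K + 2 * C) (by positivity)
    (by positivity), hγ, isMorseWith_of_uniform_approx hX hC hqie fun T => ?_⟩
  obtain ⟨n, hTn, hn⟩ := happrox T 1 one_pos
  exact ⟨σ n, _, G n, L n, hTn, hσ n, hGM n, (hclose n).1, (hclose n).2, hn⟩

/-- Let `Y` (standing for the finitely generated subgroup `H` with its word
metric) be a proper geodesic space with a geometric action of a group `H`, quasi-isometrically
embedded (undistorted) via an equivariant map `ι` into the proper geodesic space `X`
(standing for the Cayley graph of `G`, on which `H` also acts by isometries).  If the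
relative Morse boundary is empty — no geodesic ray of `Y` remains Morse in `X` — then for
every Morse gauge `M` there is `D` such that any two points of `ι Y` joined by an `M`-Morse
geodesic of `X` are at distance at most `D`. -/
theorem statement15 {X : Type u} {Y : Type u} [MetricSpace X] [MetricSpace Y]
    [ProperSpace X] [ProperSpace Y]
    (hX : GeodesicSpace X) (hY : GeodesicSpace Y)
    (H : Type u) [Group H] [MulAction H X] [MulAction H Y]
    (hHX : ∀ h : H, Isometry (fun x : X => h • x))
    (hHY : ∀ h : H, Isometry (fun y : Y => h • y))
    (y₀ : Y) (ι : Y → X)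
    (hequiv : ∀ (h : H) (y : Y), ι (h • y) = h • ι y)
    (C : ℝ) (hC : 1 ≤ C)
    (hqie : ∀ y₁ y₂ : Y,
      (1 / C) * dist y₁ y₂ - C ≤ dist (ι y₁) (ι y₂) ∧
      dist (ι y₁) (ι y₂) ≤ C * dist y₁ y₂ + C)
    (hcobounded : ∀ y : Y, ∃ h : H, dist (h • y₀) y ≤ C)
    (hrel : ¬ ∃ (γ : ℝ → Y) (N : ℝ → ℝ → ℝ), IsMorseGauge N ∧
      IsGeodesicOn γ (Ici 0) ∧ IsMorseWith N (fun r => ι (γ r)) (Ici 0))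
    (M : ℝ → ℝ → ℝ) (hM : IsMorseGauge M) :
    ∃ D : ℝ, ∀ (y₁ y₂ : Y) (g : ℝ → X) (L : ℝ), 0 ≤ L →
      g 0 = ι y₁ → g L = ι y₂ →
      IsGeodesicOn g (Icc 0 L) → IsMorseWith M g (Icc 0 L) →
      dist (ι y₁) (ι y₂) ≤ D :=
  statement15_general hX hY H hHX hHY y₀ ι hequiv C hC hqie hcobounded hrel M hM
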